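/- There exist constants C, R > 0 such that for every x' ∈ ℝ², every A' ∈ SL(2,ℝ), and every pair (y, B) with y ∈ ℝ² and B a 2×2 real matrix satisfying Tr(A'^{−1}B) = 0: √(|y|² + |B|²) ≤ C · |A'| · max_{k ∈ ℤ²∖{(0,0)}, |k| ≤ R} | u_k(x')·y + ⟨A'·∇u_k(x'), B⟩ |. -/

import Mathlib

open Real

/-- The real Fourier basis function `e_k` on `ℝ²`. -/
noncomputable def eFun (k : ℤ × ℤ) (x : ℝ × ℝ) : ℝ :=
  if 0 < k.1 ∨ (k.1 = 0 ∧ 0 < k.2) then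
    Real.sin ((k.1 : ℝ) * x.1 + (k.2 : ℝ) * x.2)
  else
    Real.cos ((k.1 : ℝ) * x.1 + (k.2 : ℝ) * x.2)

/-- The divergence-free velocity field `u_k := ∇^⊥ Δ^{-1} e_k = -|k|^{-2} ∇^⊥ e_k`,
where `∇^⊥ f = (-∂₂ f, ∂₁ f)`. -/
noncomputable def uFun (k : ℤ × ℤ) (x : ℝ × ℝ) : ℝ × ℝ :=
  (-(((k.1 : ℝ) ^ 2 + (k.2 : ℝ) ^ 2)⁻¹)) •
    (-(fderiv ℝ (eFun k) x (0, 1)), fderiv ℝ (eFun k) x (1, 0))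

/-- The Euclidean dot product on `ℝ²`. -/
def dotR (a b : ℝ × ℝ) : ℝ := a.1 * b.1 + a.2 * b.2

/-- The gradient matrix `∇u_k(x)` with entries `(∇u_k(x))_{ij} = ∂_i (u_k)_j (x)`. -/
noncomputable def gradU (k : ℤ × ℤ) (x : ℝ × ℝ) : Matrix (Fin 2) (Fin 2) ℝ :=
  Matrix.of fun i j =>
    if j = 0 then (fderiv ℝ (uFun k) x (if i = 0 then ((1 : ℝ), (0 : ℝ)) else (0, 1))).1
    else (fderiv ℝ (uFun k) x (if i = 0 then ((1 : ℝ), (0 : ℝ)) else (0, 1))).2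

/-- The Frobenius inner product `⟨M, N⟩ = Tr(MᵀN)` on `2 × 2` real matrices. -/
def frob (M N : Matrix (Fin 2) (Fin 2) ℝ) : ℝ := ∑ i, ∑ j, M i j * N i j

/-- The Frobenius norm of a `2 × 2` real matrix. -/
noncomputable def frobNorm (M : Matrix (Fin 2) (Fin 2) ℝ) : ℝ := Real.sqrt (frob M M)

/-!
Writing `θ = k·x'` for a lexicographically positive `k`, the modes `k` and `-k` contribute
`|k|⁻² (sin θ · b - cos θ · a)` and `|k|⁻² (cos θ · b + sin θ · a)`, where `a = k^⊥·y` and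
`b = ⟨A'k, Bk^⊥⟩ = kᵀ M k^⊥` with `M = A'ᵀB`; so together they bound `a² + b²` by the maximum.
The frequencies `(1,0), (0,1), (1,1), (1,-1)` (hence `R = 2`) then bound `y` and
`M₀₁, M₁₀, M₁₁ - M₀₀`. The missing `tr M` is pinned down by `0 = Tr(A'⁻¹B) = Tr(HM)` with
`H = A'⁻¹A'⁻ᵀ` symmetric of determinant one, and `B = A'⁻ᵀM` with `|A'⁻ᵀ| = |A'|` gives the factor `|A'|`.
-/

noncomputable section

open Matrix

def modePhase (k : ℤ × ℤ) : ℝ := if 0 < k.1 ∨ (k.1 = 0 ∧ 0 < k.2) then 0 else π / 2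

def modeArg (k : ℤ × ℤ) (x : ℝ × ℝ) : ℝ := (k.1 : ℝ) * x.1 + (k.2 : ℝ) * x.2 + modePhase k

def freqNormSq (k : ℤ × ℤ) : ℝ := (k.1 : ℝ) ^ 2 + (k.2 : ℝ) ^ 2

def freqCLM (k : ℤ × ℤ) : (ℝ × ℝ) →L[ℝ] ℝ :=
  (k.1 : ℝ) • ContinuousLinearMap.fst ℝ ℝ ℝ + (k.2 : ℝ) • ContinuousLinearMap.snd ℝ ℝ ℝ

lemma hasFDerivAt_modeArg (k : ℤ × ℤ) (x : ℝ × ℝ) :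
    HasFDerivAt (modeArg k) (freqCLM k) x :=
  ((hasFDerivAt_fst.const_mul _).add (hasFDerivAt_snd.const_mul _)).add_const _

-- cos t = sin (t + π / 2) puts both kinds of modes in one formula.
lemma eFun_eq_sin_modeArg (k : ℤ × ℤ) : eFun k = fun x => sin (modeArg k x) := by
  funext x
  unfold eFun modeArg modePhase
  split_ifs <;> simp [sin_add_pi_div_two]

lemma uFun_eq (k : ℤ × ℤ) (x : ℝ × ℝ) :
    uFun k x = (-((freqNormSq k)⁻¹ * cos (modeArg k x))) • (-(k.2 : ℝ), (k.1 : ℝ)) := by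
  rw [uFun, eFun_eq_sin_modeArg, ((hasFDerivAt_modeArg k x).sin).fderiv]
  ext <;> simp [freqCLM, freqNormSq] <;> ring

lemma hasFDerivAt_uFun (k : ℤ × ℤ) (x : ℝ × ℝ) :
    HasFDerivAt (uFun k)
      (((freqNormSq k)⁻¹ * sin (modeArg k x)) • (freqCLM k).smulRight (-(k.2 : ℝ), (k.1 : ℝ))) x := by
  have h := (((hasFDerivAt_modeArg k x).cos.const_mul (freqNormSq k)⁻¹).neg).smul_const
    (-(k.2 : ℝ), (k.1 : ℝ))
  rw [show uFun k = _ from funext (uFun_eq k)]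
  refine h.congr_fderiv ?_
  ext <;> simp [freqCLM] <;> ring

lemma gradU_eq (k : ℤ × ℤ) (x : ℝ × ℝ) :
    gradU k x = ((freqNormSq k)⁻¹ * sin (modeArg k x)) •
      vecMulVec ![(k.1 : ℝ), k.2] ![-(k.2 : ℝ), k.1] := by
  ext i j
  fin_cases i <;> fin_cases j <;> simp [gradU, (hasFDerivAt_uFun k x).fderiv, freqCLM]

lemma frob_mul_vecMulVec (A B : Matrix (Fin 2) (Fin 2) ℝ) (u v : Fin 2 → ℝ) :
    frob (A * vecMulVec u v) B = (A *ᵥ u) ⬝ᵥ (B *ᵥ v) := by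
  simp only [frob, Fin.sum_univ_two, mul_apply, vecMulVec_apply, mulVec, dotProduct]
  ring

lemma forcing_eq (k : ℤ × ℤ) (x : ℝ × ℝ) (A B : Matrix (Fin 2) (Fin 2) ℝ) (y : ℝ × ℝ) :
    dotR (uFun k x) y + frob (A * gradU k x) B =
      (freqNormSq k)⁻¹ * (sin (modeArg k x) * ((A *ᵥ ![(k.1 : ℝ), k.2]) ⬝ᵥ (B *ᵥ ![-(k.2 : ℝ), k.1]))
        - cos (modeArg k x) * (-(k.2 : ℝ) * y.1 + k.1 * y.2)) := by
  rw [uFun_eq, gradU_eq, Matrix.mul_smul, ← frob_mul_vecMulVec]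
  simp only [frob, dotR, Matrix.smul_apply, Prod.smul_fst, Prod.smul_snd, smul_eq_mul, Fin.sum_univ_two]
  ring

lemma modeArg_neg (k : ℤ × ℤ) (hk : 0 < k.1 ∨ (k.1 = 0 ∧ 0 < k.2)) (x : ℝ × ℝ) :
    modeArg (-k) x = π / 2 - modeArg k x := by
  have hk' : ¬(0 < (-k).1 ∨ ((-k).1 = 0 ∧ 0 < (-k).2)) := by
    simp only [Prod.fst_neg, Prod.snd_neg]; omega
  unfold modeArg modePhase
  rw [if_pos hk, if_neg hk']
  simp only [Prod.fst_neg, Prod.snd_neg, Int.cast_neg]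
  ring

lemma freqNormSq_pos (k : ℤ × ℤ) (hk : 0 < k.1 ∨ (k.1 = 0 ∧ 0 < k.2)) : 0 < freqNormSq k := by
  unfold freqNormSq
  rcases hk with h | h
  · have : (0 : ℝ) < k.1 := by exact_mod_cast h
    positivity
  · have : (0 : ℝ) < k.2 := by exact_mod_cast h.2
    positivity

-- Switching `k` to `-k` turns the mode phase `θ` into `π/2 - θ`, a quarter rotation of `(sin θ, cos θ)`.
lemma sq_add_sq_le_of_abs_forcing_le (k : ℤ × ℤ) (hk : 0 < k.1 ∨ (k.1 = 0 ∧ 0 < k.2))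
    (x : ℝ × ℝ) (A B : Matrix (Fin 2) (Fin 2) ℝ) (y : ℝ × ℝ) {S : ℝ}
    (hS : |dotR (uFun k x) y + frob (A * gradU k x) B| ≤ S)
    (hS_neg : |dotR (uFun (-k) x) y + frob (A * gradU (-k) x) B| ≤ S) :
    (-(k.2 : ℝ) * y.1 + k.1 * y.2) ^ 2 + ((A *ᵥ ![(k.1 : ℝ), k.2]) ⬝ᵥ (B *ᵥ ![-(k.2 : ℝ), k.1])) ^ 2
      ≤ 2 * freqNormSq k ^ 2 * S ^ 2 := by
  set a := -(k.2 : ℝ) * y.1 + k.1 * y.2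
  set b := (A *ᵥ ![(k.1 : ℝ), k.2]) ⬝ᵥ (B *ᵥ ![-(k.2 : ℝ), k.1])
  set θ := modeArg k x
  have hF : dotR (uFun k x) y + frob (A * gradU k x) B =
      (freqNormSq k)⁻¹ * (sin θ * b - cos θ * a) := forcing_eq k x A B y
  have hF_neg : dotR (uFun (-k) x) y + frob (A * gradU (-k) x) B =
      (freqNormSq k)⁻¹ * (cos θ * b + sin θ * a) := by
    rw [forcing_eq, modeArg_neg k hk, sin_pi_div_two_sub, cos_pi_div_two_sub]
    simp only [freqNormSq, a, b, Prod.fst_neg, Prod.snd_neg, Int.cast_neg, neg_neg, even_two,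
      Even.neg_pow, dotProduct, mulVec, Fin.sum_univ_two, Matrix.cons_val_zero, Matrix.cons_val_one]
    ring
  have hsum : a ^ 2 + b ^ 2 = freqNormSq k ^ 2 *
      ((dotR (uFun k x) y + frob (A * gradU k x) B) ^ 2
        + (dotR (uFun (-k) x) y + frob (A * gradU (-k) x) B) ^ 2) := by
    rw [hF, hF_neg]
    field_simp [(freqNormSq_pos k hk).ne']
    linear_combination -(a ^ 2 + b ^ 2) * sin_sq_add_cos_sq θ
  rw [hsum]
  have h1 := sq_le_sq' (abs_le.mp hS).1 (abs_le.mp hS).2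
  have h2 := sq_le_sq' (abs_le.mp hS_neg).1 (abs_le.mp hS_neg).2
  nlinarith [sq_nonneg (freqNormSq k)]

-- `tr(HM) = 0` reads `tr H · tr M = (H₀₀ - H₁₁)(M₁₁ - M₀₀) - 2H₀₁(M₀₁ + M₁₀)`, and since `det H = 1`
-- the coefficients satisfy `(H₀₀ - H₁₁)² + (2H₀₁)² = (tr H)² - 4`: Cauchy–Schwarz concludes.
lemma trace_sq_le_of_trace_mul_eq_zero {H M : Matrix (Fin 2) (Fin 2) ℝ} (hH : H.IsSymm)
    (hdet : H.det = 1) (htr : (H * M).trace = 0) :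
    M.trace ^ 2 ≤ (M 1 1 - M 0 0) ^ 2 + (M 0 1 + M 1 0) ^ 2 := by
  have hsym : H 1 0 = H 0 1 := hH.apply 0 1
  rw [det_fin_two, hsym] at hdet
  simp only [trace_fin_two, mul_apply, Fin.sum_univ_two, hsym] at htr ⊢
  have hrel : (H 0 0 + H 1 1) * (M 0 0 + M 1 1) =
      (H 0 0 - H 1 1) * (M 1 1 - M 0 0) - 2 * H 0 1 * (M 0 1 + M 1 0) := by
    linear_combination 2 * htr
  have hcoef : (H 0 0 - H 1 1) ^ 2 + (2 * H 0 1) ^ 2 = (H 0 0 + H 1 1) ^ 2 - 4 := by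
    linear_combination -4 * hdet
  have hcs : ((H 0 0 + H 1 1) * (M 0 0 + M 1 1)) ^ 2 ≤
      ((H 0 0 + H 1 1) ^ 2 - 4) * ((M 1 1 - M 0 0) ^ 2 + (M 0 1 + M 1 0) ^ 2) := by
    rw [hrel, ← hcoef]
    nlinarith [sq_nonneg ((H 0 0 - H 1 1) * (M 0 1 + M 1 0) + 2 * H 0 1 * (M 1 1 - M 0 0))]
  have hpos : 4 ≤ (H 0 0 + H 1 1) ^ 2 := by nlinarith [sq_nonneg (H 0 0 - H 1 1), sq_nonneg (H 0 1)]
  nlinarith [sq_nonneg (M 0 0 + M 1 1), sq_nonneg (M 1 1 - M 0 0), sq_nonneg (M 0 1 + M 1 0)]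

lemma frob_mul_self_le (X Y : Matrix (Fin 2) (Fin 2) ℝ) :
    frob (X * Y) (X * Y) ≤ frob X X * frob Y Y := by
  simp only [frob, mul_apply, Fin.sum_univ_two]
  nlinarith [sq_nonneg (X 0 0 * Y 1 0 - X 0 1 * Y 0 0), sq_nonneg (X 0 0 * Y 1 1 - X 0 1 * Y 0 1),
    sq_nonneg (X 1 0 * Y 1 0 - X 1 1 * Y 0 0), sq_nonneg (X 1 0 * Y 1 1 - X 1 1 * Y 0 1)]

lemma frob_self_inv_transpose {A : Matrix (Fin 2) (Fin 2) ℝ} (hdet : A.det = 1) :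
    frob Aᵀ⁻¹ Aᵀ⁻¹ = frob A A := by
  rw [← transpose_nonsing_inv, inv_def, hdet, Ring.inverse_one, one_smul, adjugate_fin_two]
  simp only [frob, Fin.sum_univ_two, transpose_apply, of_apply, cons_val', cons_val_zero,
    cons_val_one, empty_val', cons_val_fin_one]
  ring

lemma two_le_frob_self_of_det_eq_one {A : Matrix (Fin 2) (Fin 2) ℝ} (hdet : A.det = 1) :
    2 ≤ frob A A := by
  rw [det_fin_two] at hdet
  simp only [frob, Fin.sum_univ_two]
  nlinarith [sq_nonneg (A 0 0 - A 1 1), sq_nonneg (A 0 1 + A 1 0)]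

lemma frob_self_le_of_trace_mul_eq_zero {M H : Matrix (Fin 2) (Fin 2) ℝ} (hH : H.IsSymm)
    (hdet : H.det = 1) (htr : (H * M).trace = 0) {T : ℝ} (h₁ : M 0 1 ^ 2 ≤ T) (h₂ : M 1 0 ^ 2 ≤ T)
    (h₃ : (-M 0 0 + M 0 1 - M 1 0 + M 1 1) ^ 2 ≤ 4 * T)
    (h₄ : (M 0 0 + M 0 1 - M 1 0 - M 1 1) ^ 2 ≤ 4 * T) :
    frob M M ≤ 8 * T := by
  have htrace := trace_sq_le_of_trace_mul_eq_zero hH hdet htr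
  rw [trace_fin_two] at htrace
  have hdiff : (M 1 1 - M 0 0) ^ 2 ≤ 4 * T := by
    nlinarith [sq_nonneg (-M 0 0 + M 0 1 - M 1 0 + M 1 1 + (M 0 0 + M 0 1 - M 1 0 - M 1 1))]
  have hsum : (M 0 1 + M 1 0) ^ 2 ≤ 4 * T := by nlinarith [sq_nonneg (M 0 1 - M 1 0)]
  simp only [frob, Fin.sum_univ_two]
  nlinarith

lemma sq_add_frob_le {A B : Matrix (Fin 2) (Fin 2) ℝ} (hdet : A.det = 1)
    (htr : (A⁻¹ * B).trace = 0) (y : ℝ × ℝ) {S : ℝ}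
    (h₁ : y.2 ^ 2 + ((A *ᵥ ![1, 0]) ⬝ᵥ (B *ᵥ ![0, 1])) ^ 2 ≤ 2 * S ^ 2)
    (h₂ : y.1 ^ 2 + ((A *ᵥ ![0, 1]) ⬝ᵥ (B *ᵥ ![-1, 0])) ^ 2 ≤ 2 * S ^ 2)
    (h₃ : (-y.1 + y.2) ^ 2 + ((A *ᵥ ![1, 1]) ⬝ᵥ (B *ᵥ ![-1, 1])) ^ 2 ≤ 8 * S ^ 2)
    (h₄ : (y.1 + y.2) ^ 2 + ((A *ᵥ ![1, -1]) ⬝ᵥ (B *ᵥ ![1, 1])) ^ 2 ≤ 8 * S ^ 2) :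
    y.1 ^ 2 + y.2 ^ 2 + frob B B ≤ 18 * frob A A * S ^ 2 := by
  have hunit : IsUnit Aᵀ.det := by simp [hdet]
  set N := Aᵀ⁻¹
  set M := Aᵀ * B
  have hB : B = N * M := (nonsing_inv_mul_cancel_left _ B hunit).symm
  have hNt : Nᵀ = A⁻¹ := by rw [transpose_nonsing_inv, transpose_transpose]
  have hform (u v : Fin 2 → ℝ) : (A *ᵥ u) ⬝ᵥ (B *ᵥ v) = u ⬝ᵥ (M *ᵥ v) := by
    rw [← vecMul_transpose, ← dotProduct_mulVec, mulVec_mulVec]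
  rw [hform] at h₁ h₂ h₃ h₄
  simp only [dotProduct, mulVec, Fin.sum_univ_two] at h₁ h₂ h₃ h₄
  norm_num at h₁ h₂ h₃ h₄
  have hM : frob M M ≤ 8 * (2 * S ^ 2) := by
    refine frob_self_le_of_trace_mul_eq_zero (H := Nᵀ * N) (isSymm_transpose_mul_self N) ?_ ?_
      (by nlinarith) (by nlinarith) (by nlinarith) (by nlinarith)
    · simp [N, det_nonsing_inv, hdet]
    · rw [Matrix.mul_assoc, ← hB, hNt, htr]
  have hBM : frob B B ≤ frob A A * frob M M := by
    rw [hB, ← frob_self_inv_transpose hdet]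
    exact frob_mul_self_le N M
  have hA := two_le_frob_self_of_det_eq_one hdet
  nlinarith [sq_nonneg S]

lemma finite_setOf_sq_add_sq_le (R : ℝ) :
    {k : ℤ × ℤ | (k.1 : ℝ) ^ 2 + (k.2 : ℝ) ^ 2 ≤ R ^ 2}.Finite := by
  refine (Set.finite_Icc (-⌈|R|⌉, -⌈|R|⌉) (⌈|R|⌉, ⌈|R|⌉)).subset fun k hk => ?_
  have hcoord {m : ℤ} (hm : (m : ℝ) ^ 2 ≤ R ^ 2) : -⌈|R|⌉ ≤ m ∧ m ≤ ⌈|R|⌉ := by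
    have := (abs_le.mp ((sq_le_sq.mp hm).trans (Int.le_ceil |R|)))
    exact ⟨by exact_mod_cast this.1, by exact_mod_cast this.2⟩
  have h₁ := hcoord (m := k.1) (by nlinarith [sq_nonneg (k.2 : ℝ), hk.out])
  have h₂ := hcoord (m := k.2) (by nlinarith [sq_nonneg (k.1 : ℝ), hk.out])
  exact ⟨⟨h₁.1, h₂.1⟩, ⟨h₁.2, h₂.2⟩⟩

lemma le_sSup_of_sq_add_sq_le (g : ℤ × ℤ → ℝ) {R : ℝ} {k : ℤ × ℤ} (hk : k ≠ 0)
    (hkR : (k.1 : ℝ) ^ 2 + (k.2 : ℝ) ^ 2 ≤ R ^ 2) :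
    g k ≤ sSup {t | ∃ k : ℤ × ℤ, k ≠ 0 ∧ (k.1 : ℝ) ^ 2 + (k.2 : ℝ) ^ 2 ≤ R ^ 2 ∧ t = g k} := by
  refine le_csSup (((finite_setOf_sq_add_sq_le R).image g).subset ?_).bddAbove ⟨k, hk, hkR, rfl⟩
  rintro _ ⟨j, -, hjR, rfl⟩
  exact ⟨j, hjR, rfl⟩

end

/-- **Nondegeneracy of the forcing directions for the Jacobian process.**
There are `C, R > 0` such that for all `x' ∈ ℝ²`, `A' ∈ SL(2,ℝ)`, `y ∈ ℝ²` and `2×2`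
matrices `B` with `Tr(A'⁻¹ B) = 0`:
`√(|y|² + |B|²) ≤ C |A'| max_{0<|k|≤R} |u_k(x')·y + ⟨A' ∇u_k(x'), B⟩|`. -/
theorem jacobian_nondegeneracy :
    ∃ C > (0 : ℝ), ∃ R > (0 : ℝ),
      ∀ x' : ℝ × ℝ, ∀ A' : Matrix (Fin 2) (Fin 2) ℝ, A'.det = 1 →
      ∀ y : ℝ × ℝ, ∀ B : Matrix (Fin 2) (Fin 2) ℝ, Matrix.trace (A'⁻¹ * B) = 0 →
      Real.sqrt (y.1 ^ 2 + y.2 ^ 2 + frob B B) ≤ C * frobNorm A' *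
        sSup {t | ∃ k : ℤ × ℤ, k ≠ 0 ∧ (k.1 : ℝ) ^ 2 + (k.2 : ℝ) ^ 2 ≤ R ^ 2 ∧
          t = |dotR (uFun k x') y + frob (A' * gradU k x') B|} := by
  refine ⟨5, by norm_num, 2, by norm_num, fun x A hdet y B htr => ?_⟩
  set S := sSup {t | ∃ k : ℤ × ℤ, k ≠ 0 ∧ (k.1 : ℝ) ^ 2 + (k.2 : ℝ) ^ 2 ≤ 2 ^ 2 ∧
    t = |dotR (uFun k x) y + frob (A * gradU k x) B|}
  have hF (k : ℤ × ℤ) (hk : k ≠ 0) (hkR : (k.1 : ℝ) ^ 2 + (k.2 : ℝ) ^ 2 ≤ 2 ^ 2) :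
      |dotR (uFun k x) y + frob (A * gradU k x) B| ≤ S :=
    le_sSup_of_sq_add_sq_le (fun k => |dotR (uFun k x) y + frob (A * gradU k x) B|) hk hkR
  have hpair (k : ℤ × ℤ) (hk : 0 < k.1 ∨ (k.1 = 0 ∧ 0 < k.2))
      (hkR : (k.1 : ℝ) ^ 2 + (k.2 : ℝ) ^ 2 ≤ 2 ^ 2) :=
    sq_add_sq_le_of_abs_forcing_le k hk x A B y (hF k (by rintro rfl; simp at hk) hkR)
      (hF (-k) (by rw [neg_ne_zero]; rintro rfl; simp at hk) (by simpa using hkR))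
  have h₁ := hpair (1, 0) (by decide) (by norm_num)
  have h₂ := hpair (0, 1) (by decide) (by norm_num)
  have h₃ := hpair (1, 1) (by decide) (by norm_num)
  have h₄ := hpair (1, -1) (by decide) (by norm_num)
  simp only [freqNormSq, Int.cast_zero, Int.cast_one, Int.cast_neg, neg_zero, neg_neg, zero_mul,
    one_mul, neg_mul, zero_add, add_zero, neg_sq] at h₁ h₂ h₃ h₄
  norm_num only at h₁ h₂ h₃ h₄
  have hbound := sq_add_frob_le hdet htr y h₁ h₂ h₃ h₄
  have hS : 0 ≤ S := (abs_nonneg _).trans (hF (1, 0) (by decide) (by norm_num))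
  have hA : frobNorm A ^ 2 = frob A A :=
    Real.sq_sqrt ((two_le_frob_self_of_det_eq_one hdet).trans' zero_le_two)
  rw [Real.sqrt_le_iff]
  refine ⟨mul_nonneg (mul_nonneg (by norm_num) (Real.sqrt_nonneg _)) hS, ?_⟩
  nlinarith [sq_nonneg S, two_le_frob_self_of_det_eq_one hdet]
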